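/- Lemma (interposed end is neutral): For all guards e, e' such that ¬(e ⟺ false) and e ⟹ e', and all pseudo-types 𝕋, 𝕋', the equality nf_e(𝕋 ; ([e']end ; 𝕋')) = nf_e(𝕋 ; 𝕋') holds. -/
import Mathlib


namespace WSI

/-! ## Basic entities -/

abbrev Var := ℕ
abbrev Chan := ℕ
abbrev Part := ℕ
abbrev SName := ℕ
abbrev Srt := ℕ
/-- A value carries its sort. -/
abbrev Value := Srt × ℕ

def HasSort (v : Value) (d : Srt) : Prop := v.1 = d

/-- A store maps variables to values and shared names to tuples of session channels. -/
structure Store where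
  vars : Var → Option Value
  sess : SName → Option (List Chan)

def Store.updVar (σ : Store) (x : Var) (v : Value) : Store :=
  ⟨Function.update σ.vars x (some v), σ.sess⟩

def Store.updSess (σ : Store) (u : SName) (ys : List Chan) : Store :=
  ⟨σ.vars, Function.update σ.sess u (some ys)⟩

def Store.emptyS : Store := ⟨fun _ => none, fun _ => none⟩

def Store.HasChan (σ : Store) (y : Chan) : Prop := ∃ u l, σ.sess u = some l ∧ y ∈ l
def Store.DomV (σ : Store) : Set Var := {x | σ.vars x ≠ none}
def Store.DomU (σ : Store) : Set SName := {u | σ.sess u ≠ none}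
def Store.SubDom (σ σ' : Store) : Prop := σ.DomV ⊆ σ'.DomV ∧ σ.DomU ⊆ σ'.DomU
def Store.Extends (σ' σ : Store) : Prop :=
  (∀ x v, σ.vars x = some v → σ'.vars x = some v) ∧
  (∀ u l, σ.sess u = some l → σ'.sess u = some l)

/-! ## Guards (modeled semantically) -/

abbrev Guard := Store → Bool

def Guard.and (e e' : Guard) : Guard := fun σ => e σ && e' σ
def Guard.or (e e' : Guard) : Guard := fun σ => e σ || e' σ
def Guard.not (e : Guard) : Guard := fun σ => !(e σ)
def Guard.tt : Guard := fun _ => true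
def Guard.ff : Guard := fun _ => false
def Guard.Iff (e e' : Guard) : Prop := ∀ σ, e σ = e' σ
def Guard.Imp (e e' : Guard) : Prop := ∀ σ, e σ = true → e' σ = true
def Guard.IsFalse (e : Guard) : Prop := ∀ σ, e σ = false
def Guard.IndepVar (e : Guard) (x : Var) : Prop := ∀ σ v, e (σ.updVar x v) = e σ

/-! ## Pseudo-types -/

mutual
inductive PT : Type where
  | endP : Guard → PT
  | intC : Branches → PT
  | extC : Branches → PT
  | seqT : PT → PT → PT
  | iter : PT → PT
inductive Branches : Type where
  | nil : Branches
  | cons : Guard → Chan → Srt → PT → Branches → Branches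
end

def Branches.toList : Branches → List (Guard × Chan × Srt × PT)
  | .nil => []
  | .cons e y d T bs => (e, y, d, T) :: bs.toList

def Branches.ofList : List (Guard × Chan × Srt × PT) → Branches
  | [] => .nil
  | (e, y, d, T) :: l => .cons e y d T (Branches.ofList l)

def Branches.append : Branches → Branches → Branches
  | .nil, bs => bs
  | .cons e y d T bs, bs' => .cons e y d T (bs.append bs')

/-- Postfix every continuation with `;T'`. -/
def Branches.seqAll : Branches → PT → Branches
  | .nil, _ => .nil
  | .cons e y d T bs, T' => .cons e y d (.seqT T T') (bs.seqAll T')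

def Branches.chans : Branches → List Chan
  | .nil => []
  | .cons _ y _ _ bs => y :: bs.chans

-- The weight ω of a pseudo-type.
mutual
def PT.omega : PT → ℕ
  | .endP _ => 1
  | .intC bs => 1 + bs.maxW
  | .extC bs => 1 + bs.maxW
  | .seqT a b => 2 * a.omega + b.omega
  | .iter a => 1 + a.omega
def Branches.maxW : Branches → ℕ
  | .nil => 0
  | .cons _ _ _ T bs => max T.omega bs.maxW
end

-- Guard erasure (deleting every guard of a pseudo-type).
mutual
def PT.erase : PT → PT
  | .endP _ => .endP Guard.tt
  | .intC bs => .intC bs.eraseBr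
  | .extC bs => .extC bs.eraseBr
  | .seqT a b => .seqT a.erase b.erase
  | .iter a => .iter a.erase
def Branches.eraseBr : Branches → Branches
  | .nil => .nil
  | .cons _ y d T bs => .cons Guard.tt y d T.erase bs.eraseBr
end

-- Semantic independence of the guards of a pseudo-type from a variable.
mutual
def PT.IndepVar : PT → Var → Prop
  | .endP e, x => Guard.IndepVar e x
  | .intC bs, x => bs.IndepVarBr x
  | .extC bs, x => bs.IndepVarBr x
  | .seqT a b, x => a.IndepVar x ∧ b.IndepVar x
  | .iter a, x => a.IndepVar x
def Branches.IndepVarBr : Branches → Var → Prop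
  | .nil, _ => True
  | .cons e _ _ T bs, x => Guard.IndepVar e x ∧ T.IndepVar x ∧ bs.IndepVarBr x
end

/-- All the branches are dead under assumption `e`. -/
def AllDead (e : Guard) (bs : Branches) : Prop :=
  ∀ b ∈ bs.toList, Guard.IsFalse (Guard.and e b.1)

/-- `EndForm e T` holds iff the normal form `nf_e(T)` is of the shape `[e']end`. -/
inductive EndForm : Guard → PT → Prop where
  | endE : EndForm e (.endP e')
  | intE : AllDead e bs → EndForm e (.intC bs)
  | extE : AllDead e bs → EndForm e (.extC bs)
  | seqEndE : EndForm (Guard.and e e') T → EndForm e (.seqT (.endP e') T)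
  | seqIntE : AllDead e bs → EndForm e (.seqT (.intC bs) T)
  | seqExtE : AllDead e bs → EndForm e (.seqT (.extC bs) T)
  | seqSeqE : EndForm e (.seqT T₁ (.seqT T₂ T₃)) → EndForm e (.seqT (.seqT T₁ T₂) T₃)
  | seqIterE : EndForm e T₁ → EndForm e (.seqT (.iter T₁) T₂)
  | iterE : EndForm e T → EndForm e (.iter T)

-- The normalisation `nf_e(𝕋)`, presented as a relation defined by the
-- defining equations of the paper.
mutual
inductive NF : Guard → PT → PT → Prop where
  | endN : NF e (.endP e') (.endP (Guard.and e e'))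
  | intAllDead : AllDead e bs → NF e (.intC bs) (.endP Guard.ff)
  | intN : ¬ AllDead e bs → NFBr e bs bs' → NF e (.intC bs) (.intC bs')
  | extAllDead : AllDead e bs → NF e (.extC bs) (.endP Guard.ff)
  | extN : ¬ AllDead e bs → NFBr e bs bs' → NF e (.extC bs) (.extC bs')
  | seqEnd : NF (Guard.and e e') T U → NF e (.seqT (.endP e') T) U
  | seqInt : NF e (.intC (Branches.seqAll bs T)) U → NF e (.seqT (.intC bs) T) U
  | seqExt : NF e (.extC (Branches.seqAll bs T)) U → NF e (.seqT (.extC bs) T) U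
  | seqSeq : NF e (.seqT T₁ (.seqT T₂ T₃)) U → NF e (.seqT (.seqT T₁ T₂) T₃) U
  | seqIterEnd : NF e T₁ (.endP e') → NF e (.seqT (.iter T₁) T₂) (.endP e')
  | seqIterN : ¬ EndForm e T₁ → NF e (.iter T₁) U₁ → NF e T₂ U₂ →
      NF e (.seqT (.iter T₁) T₂) (.seqT U₁ U₂)
  | iterEnd : NF e T (.endP e') → NF e (.iter T) (.endP e')
  | iterN : ¬ EndForm e T → NF e T U → NF e (.iter T) (.iter U)
inductive NFBr : Guard → Branches → Branches → Prop where
  | nil : NFBr e .nil .nil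
  | consDead : Guard.IsFalse (Guard.and e e') → NFBr e bs bs' →
      NFBr e (.cons e' y d T bs) bs'
  | consLive : ¬ Guard.IsFalse (Guard.and e e') → NF (Guard.and e' e) T U → NFBr e bs bs' →
      NFBr e (.cons e' y d T bs) (.cons (Guard.and e' e) y d U bs')
end

/-- The recursive-call relation of the defining equations of `nf`:
    `NFCall (e'',T'') (e,T)` holds when the equation applied to `nf_e(T)`
    makes the recursive call `nf_{e''}(T'')`. -/
inductive NFCall : Guard × PT → Guard × PT → Prop where
  | intBr : (e', y, d, T) ∈ Branches.toList bs → ¬ Guard.IsFalse (Guard.and e e') →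
      NFCall (Guard.and e' e, T) (e, .intC bs)
  | extBr : (e', y, d, T) ∈ Branches.toList bs → ¬ Guard.IsFalse (Guard.and e e') →
      NFCall (Guard.and e' e, T) (e, .extC bs)
  | seqEnd : NFCall (Guard.and e e', T) (e, .seqT (.endP e') T)
  | seqInt : NFCall (e, .intC (Branches.seqAll bs T)) (e, .seqT (.intC bs) T)
  | seqExt : NFCall (e, .extC (Branches.seqAll bs T)) (e, .seqT (.extC bs) T)
  | seqSeq : NFCall (e, .seqT T₁ (.seqT T₂ T₃)) (e, .seqT (.seqT T₁ T₂) T₃)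
  | seqIterTest : NFCall (e, T₁) (e, .seqT (.iter T₁) T₂)
  | seqIterL : NFCall (e, .iter T₁) (e, .seqT (.iter T₁) T₂)
  | seqIterR : NFCall (e, T₂) (e, .seqT (.iter T₁) T₂)
  | iterTest : NFCall (e, T) (e, .iter T)

/-! ## Mergeability and merge -/

mutual
inductive Mergeable : PT → PT → Prop where
  | endM : Mergeable (.endP e) (.endP e')
  | extM : MrgBr bs bs' → Mergeable (.extC bs) (.extC bs')
  | intM : MrgBr common common' →
      (Branches.chans common).Disjoint (Branches.chans extra₁) →
      (Branches.chans common).Disjoint (Branches.chans extra₂) →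
      (Branches.chans extra₁).Disjoint (Branches.chans extra₂) →
      Mergeable (.intC (common.append extra₁)) (.intC (common'.append extra₂))
  | seqM : Mergeable a a' → Mergeable b b' → Mergeable (.seqT a b) (.seqT a' b')
  | iterM : Mergeable a a' → Mergeable (.iter a) (.iter a')
inductive MrgBr : Branches → Branches → Prop where
  | nil : MrgBr .nil .nil
  | cons : Guard.IsFalse (Guard.and e e') → Mergeable T T' → MrgBr bs bs' →
      MrgBr (.cons e y d T bs) (.cons e' y d T' bs')
end

mutual
inductive Merge : PT → PT → PT → Prop where
  | endM : Merge (.endP e) (.endP e') (.endP (Guard.or e e'))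
  | extM : MergeBr bs bs' bs'' → Merge (.extC bs) (.extC bs') (.extC bs'')
  | intM : Merge (.intC bs) (.intC bs') (.intC (bs.append bs'))
  | seqM : Merge a a' a'' → Merge b b' b'' → Merge (.seqT a b) (.seqT a' b') (.seqT a'' b'')
  | iterM : Merge a a' a'' → Merge (.iter a) (.iter a') (.iter a'')
inductive MergeBr : Branches → Branches → Branches → Prop where
  | nil : MergeBr .nil .nil .nil
  | cons : Merge T T' T'' → MergeBr bs bs' bs'' →
      MergeBr (.cons e y d T bs) (.cons e' y d T' bs') (.cons (Guard.or e e') y d T'' bs'')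
end

/-! ## Global types -/

inductive GT : Type where
  | comm : Part → List (Part × Chan × Srt × GT) → GT
  | seqG : GT → GT → GT
  | iterG : GT → (Part → Option (Chan × Srt)) → GT
  | endG : GT

inductive GT.HasPart : GT → Part → Prop where
  | commS : GT.HasPart (.comm p bs) p
  | commR : (q, y, d, G) ∈ bs → GT.HasPart (.comm p bs) q
  | commC : (q, y, d, G) ∈ bs → GT.HasPart G r → GT.HasPart (.comm p bs) r
  | seqL : GT.HasPart G₁ r → GT.HasPart (.seqG G₁ G₂) r
  | seqR : GT.HasPart G₂ r → GT.HasPart (.seqG G₁ G₂) r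
  | iterI : GT.HasPart G r → GT.HasPart (.iterG G f) r

inductive GT.Ready : GT → Part → Prop where
  | comm : GT.Ready (.comm p bs) p
  | seq : GT.Ready G₁ p → GT.Ready (.seqG G₁ G₂) p
  | iter : GT.Ready G p → GT.Ready (.iterG G f) p

/-! ## Events and annotated traces -/

inductive Event : Type where
  | sendE : Part → Chan → Srt → Event
  | recvE : Part → Chan → Srt → Event
deriving DecidableEq

inductive Item : Type where
  | ev : Event → Item
  | opt : List Item → Item

abbrev Trace := List Item

/-- The trace preorder ⋖ : the least preorder with `[r] ⋖ ε`, `ε ⋖ r` and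
    compatibility with concatenation. -/
inductive TracePre : Trace → Trace → Prop where
  | drop (r : Trace) : TracePre [Item.opt r] []
  | emp (r : Trace) : TracePre [] r
  | cmp : TracePre r₁ r₁' → TracePre r₂ r₂' → TracePre (r₁ ++ r₂) (r₁' ++ r₂')
  | refl (r : Trace) : TracePre r r
  | trans : TracePre r₁ r₂ → TracePre r₂ r₃ → TracePre r₁ r₃

/-- `R₂` covers `R₁`, written `R₁ ⋐ R₂`. -/
def Covers (R₁ R₂ : Set Trace) : Prop := ∀ r ∈ R₁, ∃ r' ∈ R₂, TracePre r r'

/-! ## Runs of a global type -/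

/-- The termination events appended at the end of an iteration. -/
def termTrace (p : Part) (fl : List (Part × Chan × Srt)) : Trace :=
  fl.flatMap (fun b => [Item.ev (.sendE p b.2.1 b.2.2), Item.ev (.recvE b.1 b.2.1 b.2.2)])

mutual
inductive GRuns : GT → Trace → Prop where
  | endR : GRuns .endG []
  | comm : (q, y, d, G) ∈ bs → GRuns G r →
      GRuns (.comm p bs) (Item.ev (.sendE p y d) :: Item.ev (.recvE q y d) :: r)
  | seqR : GRuns G₁ r₁ → GRuns G₂ r₂ → GRuns (.seqG G₁ G₂) (r₁ ++ r₂)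
  | iterR {G : GT} {f : Part → Option (Chan × Srt)} {r : Trace} {p : Part}
      {fl : List (Part × Chan × Srt)} :
      GRunsAux G f r → GT.Ready G p → (∀ q, GT.Ready G q → q = p) →
      (∀ q, GT.HasPart G q ↔ (q = p ∨ q ∈ fl.map Prod.fst)) →
      (fl.map Prod.fst).Nodup → p ∉ fl.map Prod.fst →
      (∀ b ∈ fl, f b.1 = some (b.2.1, b.2.2)) →
      GRuns (.iterG G f) (r ++ termTrace p fl)
inductive GRunsAux : GT → (Part → Option (Chan × Srt)) → Trace → Prop where
  | base : GRuns G r → GRunsAux G f r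
  | step : GRuns G r₁ → GRunsAux G f r₂ → GRunsAux G f (r₁ ++ [Item.opt r₂])
end

/-! ## Projection of global types -/

/-- The sequence of termination outputs of an iteration controller. -/
def sendSeqPT : List (Chan × Srt) → PT
  | [] => .endP Guard.tt
  | (y, d) :: rest => .seqT (.intC (.cons Guard.tt y d (.endP Guard.tt) .nil)) (sendSeqPT rest)

inductive MergeList : List PT → PT → Prop where
  | single : MergeList [T] T
  | cons : MergeList Ts T' → Merge T T' T'' → MergeList (T :: Ts) T''

mutual
inductive Proj : GT → Part → PT → Prop where
  | endRule : Proj .endG q (.endP Guard.tt)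
  | sender : ProjBr bs p bs' → Proj (.comm p bs) p (.intC bs')
  | other : q ≠ p → ProjOther bs q Ts → MergeList Ts T → Proj (.comm p bs) q T
  | seqRule : Proj G₁ q T₁ → Proj G₂ q T₂ → Proj (.seqG G₁ G₂) q (.seqT T₁ T₂)
  | iterCtrl {G : GT} {p : Part} {fl : List (Part × Chan × Srt)}
      {f : Part → Option (Chan × Srt)} {T : PT} :
      GT.Ready G p → (∀ q, GT.Ready G q → q = p) →
      (∀ q, GT.HasPart G q ↔ (q = p ∨ q ∈ fl.map Prod.fst)) →
      (∀ b ∈ fl, f b.1 = some (b.2.1, b.2.2)) →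
      Proj G p T →
      Proj (.iterG G f) p (.seqT (.iter T) (sendSeqPT (fl.map (fun b => (b.2.1, b.2.2)))))
  | iterOther : GT.Ready G p → (∀ q', GT.Ready G q' → q' = p) → q ≠ p →
      f q = some (y, d) → Proj G q T →
      Proj (.iterG G f) q (.seqT (.iter T) (.extC (.cons Guard.tt y d (.endP Guard.tt) .nil)))
inductive ProjBr : List (Part × Chan × Srt × GT) → Part → Branches → Prop where
  | nil : ProjBr [] p .nil
  | cons : Proj G p T → ProjBr bs p bs' →
      ProjBr ((q, y, d, G) :: bs) p (.cons Guard.tt y d T bs')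
inductive ProjOther : List (Part × Chan × Srt × GT) → Part → List PT → Prop where
  | nil : ProjOther [] q []
  | consRecv : Proj G q T → ProjOther bs q Ts →
      ProjOther ((q, y, d, G) :: bs) q (PT.extC (.cons Guard.tt y d T .nil) :: Ts)
  | consOther : q' ≠ q → Proj G q T → ProjOther bs q Ts →
      ProjOther ((q', y, d, G) :: bs) q (T :: Ts)
end

/-! ## Specifications -/

structure Spec where
  sh : SName → Option GT
  ep : (List Chan × Part) → Option PT
  qu : Chan → Option (List Srt)

def Spec.emptyS : Spec := ⟨fun _ => none, fun _ => none, fun _ => none⟩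

def Spec.updEp (Δ : Spec) (k : List Chan × Part) (T : PT) : Spec :=
  { Δ with ep := Function.update Δ.ep k (some T) }

def Spec.updQu (Δ : Spec) (y : Chan) (q : List Srt) : Spec :=
  { Δ with qu := Function.update Δ.qu y (some q) }

/-- Sequential composition of specifications (pointwise on endpoints). -/
def Spec.seqS (Δ₁ Δ₂ : Spec) : Spec :=
  { sh := Δ₁.sh, qu := Δ₁.qu,
    ep := fun k => match Δ₁.ep k, Δ₂.ep k with
      | some a, some b => some (.seqT a b)
      | some a, none => some a
      | none, some b => some b
      | none, none => none }

/-- Pointwise iteration of a specification. -/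
def Spec.iterS (Δ : Spec) : Spec :=
  { Δ with ep := fun k => (Δ.ep k).map .iter }

/-- Disjoint union of specifications `Δ₁, Δ₂`. -/
def Spec.union (Δ₁ Δ₂ : Spec) : Spec :=
  { sh := fun u => (Δ₁.sh u).orElse (fun _ => Δ₂.sh u),
    ep := fun k => (Δ₁.ep k).orElse (fun _ => Δ₂.ep k),
    qu := fun y => (Δ₁.qu y).orElse (fun _ => Δ₂.qu y) }

/-- Add to a specification a session on channels `ys` with endpoints `eps`
    and empty queues. -/
def Spec.addSession (Δ : Spec) (ys : List Chan) (eps : List (Part × PT)) : Spec :=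
  let Δ₁ := eps.foldl (fun a pe => a.updEp (ys, pe.1) pe.2) Δ
  ys.foldl (fun a y => a.updQu y []) Δ₁

/-- Every endpoint pseudo-type of `Δ` has normal form `[e]end`. -/
def Spec.EndOnly (Δ : Spec) : Prop :=
  ∀ k T, Δ.ep k = some T → ∃ e, NF Guard.tt T (.endP e)

/-- Every endpoint pseudo-type of `Δ` is in normal form. -/
def Spec.Normal (Δ : Spec) : Prop :=
  ∀ k T, Δ.ep k = some T → NF Guard.tt T T

/-- Every endpoint pseudo-type of `Δ` normalises to an internal choice. -/
def Spec.Active (Δ : Spec) : Prop :=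
  ∀ k T, Δ.ep k = some T → ∃ bs, NF Guard.tt T (.intC bs)

/-! ## Runs of specifications -/

inductive TypeRuns (ys : List Chan) : Spec → Trace → Prop where
  | comSend {Δ : Spec} {p : Part} {bs : Branches} {e : Guard} {y : Chan} {d : Srt}
      {T : PT} {q : List Srt} {r : Trace} :
      Δ.ep (ys, p) = some (.intC bs) →
      (e, y, d, T) ∈ Branches.toList bs →
      Δ.qu y = some q →
      TypeRuns ys ((Δ.updEp (ys, p) T).updQu y (q ++ [d])) r →
      TypeRuns ys Δ (Item.ev (.sendE p y d) :: r)
  | comRecv {Δ : Spec} {p : Part} {bs : Branches} {e : Guard} {y : Chan} {d : Srt}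
      {T : PT} {q : List Srt} {r : Trace} :
      Δ.ep (ys, p) = some (.extC bs) →
      (e, y, d, T) ∈ Branches.toList bs →
      Δ.qu y = some (d :: q) →
      TypeRuns ys ((Δ.updEp (ys, p) T).updQu y q) r →
      TypeRuns ys Δ (Item.ev (.recvE p y d) :: r)
  | it₁ {Δ : Spec} {r : Trace} : TypeRuns ys Δ r → TypeRuns ys Δ.iterS r
  | it₂ {Δ : Spec} {r₁ r₂ : Trace} : TypeRuns ys Δ r₁ → TypeRuns ys Δ.iterS r₂ →
      TypeRuns ys Δ.iterS (r₁ ++ [Item.opt r₂])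
  | endR {Δ : Spec} : Spec.EndOnly Δ → (∀ y ∈ ys, Δ.qu y = some []) → TypeRuns ys Δ []
  | seqR {Δ₁ Δ₂ : Spec} {r₁ r₂ : Trace} :
      TypeRuns ys Δ₁ r₁ → TypeRuns ys Δ₂ r₂ → TypeRuns ys (Δ₁.seqS Δ₂) (r₁ ++ r₂)

/-! ## τ-transitions of specifications -/

inductive SpecTau : Spec → Spec → Prop where
  | com₁ {Δ : Spec} {ys : List Chan} {p : Part} {bs : Branches} {e : Guard}
      {y : Chan} {d : Srt} {T : PT} {q : List Srt} :
      Δ.ep (ys, p) = some (.intC bs) → (e, y, d, T) ∈ Branches.toList bs →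
      Δ.qu y = some q →
      SpecTau Δ ((Δ.updEp (ys, p) T).updQu y (q ++ [d]))
  | com₂ {Δ : Spec} {ys : List Chan} {p : Part} {bs : Branches} {e : Guard}
      {y : Chan} {d : Srt} {T : PT} {q : List Srt} :
      Δ.ep (ys, p) = some (.extC bs) → (e, y, d, T) ∈ Branches.toList bs →
      Δ.qu y = some (d :: q) →
      SpecTau Δ ((Δ.updEp (ys, p) T).updQu y q)
  | init {Δ : Spec} {ys' : List Chan} {eps : List (Part × PT)} :
      (∀ ys₀ p, (∃ y ∈ ys₀, y ∈ ys') → Δ.ep (ys₀, p) = none) →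
      (∀ y ∈ ys', Δ.qu y = none) →
      SpecTau Δ (Δ.addSession ys' eps)
  | seq {Δ₁ Δ₁' Δ₂ : Spec} : SpecTau Δ₁ Δ₁' → SpecTau (Δ₁.seqS Δ₂) (Δ₁'.seqS Δ₂)
  | loop₀ {Δ : Spec} :
      SpecTau Δ.iterS { sh := Δ.sh, ep := fun _ => none, qu := fun _ => none }
  | loop₁ {Δ : Spec} : SpecTau Δ.iterS Δ
  | loop₂ {Δ : Spec} : SpecTau Δ.iterS (Δ.seqS Δ.iterS)

end WSI

namespace WSI

lemma and_imp_eq {e₀ e' : Guard} (h : Guard.Imp e₀ e') : Guard.and e₀ e' = e₀ := by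
  funext σ
  cases hb : e₀ σ with
  | false => simp [Guard.and, hb]
  | true => simp [Guard.and, hb, h σ hb]

lemma nf_end_left {e' e₀ : Guard} (h : Guard.Imp e₀ e') (T' V : PT) :
    NF e₀ (.seqT (.endP e') T') V ↔ NF e₀ T' V := by
  constructor
  · intro hnf
    cases hnf with
    | seqEnd h' => rwa [and_imp_eq h] at h'
  · intro hnf
    exact NF.seqEnd (by rwa [and_imp_eq h])

lemma allDead_seqAll (e : Guard) : ∀ (bs : Branches) (X : PT),
    AllDead e (bs.seqAll X) ↔ AllDead e bs
  | .nil, X => by simp [AllDead, Branches.seqAll, Branches.toList]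
  | .cons e₁ y d T bs, X => by
      have ih := allDead_seqAll e bs X
      simp only [AllDead, Branches.seqAll, Branches.toList, List.mem_cons] at *
      constructor
      · rintro h b (rfl | hb)
        · exact h (e₁, y, d, .seqT T X) (Or.inl rfl)
        · exact (ih.1 (fun b hb => h b (Or.inr hb))) b hb
      · rintro h b (rfl | hb)
        · exact h (e₁, y, d, T) (Or.inl rfl)
        · exact (ih.2 (fun b hb => h b (Or.inr hb))) b hb

mutual
theorem nf_seq_congr (e' : Guard) :
    ∀ (T X Y : PT),
      (∀ e₀, Guard.Imp e₀ e' → ∀ V, NF e₀ X V → NF e₀ Y V) →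
      ∀ e₀, Guard.Imp e₀ e' → ∀ V, NF e₀ (.seqT T X) V → NF e₀ (.seqT T Y) V
  | .endP e₁, X, Y, H, e₀, himp, V => by
      intro h
      cases h with
      | seqEnd h' =>
          exact NF.seqEnd
            (H _ (fun σ hs => himp σ ((Bool.and_eq_true _ _).mp hs).1) V h')
  | .intC bs, X, Y, H, e₀, himp, V => by
      intro h
      cases h with
      | seqInt h' =>
          cases h' with
          | intAllDead hd =>
              exact NF.seqInt (NF.intAllDead
                ((allDead_seqAll e₀ bs Y).2 ((allDead_seqAll e₀ bs X).1 hd)))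
          | intN hnd hbr =>
              exact NF.seqInt (NF.intN
                (fun hd => hnd ((allDead_seqAll e₀ bs X).2 ((allDead_seqAll e₀ bs Y).1 hd)))
                (nfBr_seq_congr e' bs X Y H e₀ himp _ hbr))
  | .extC bs, X, Y, H, e₀, himp, V => by
      intro h
      cases h with
      | seqExt h' =>
          cases h' with
          | extAllDead hd =>
              exact NF.seqExt (NF.extAllDead
                ((allDead_seqAll e₀ bs Y).2 ((allDead_seqAll e₀ bs X).1 hd)))
          | extN hnd hbr =>
              exact NF.seqExt (NF.extN
                (fun hd => hnd ((allDead_seqAll e₀ bs X).2 ((allDead_seqAll e₀ bs Y).1 hd)))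
                (nfBr_seq_congr e' bs X Y H e₀ himp _ hbr))
  | .seqT T₁ T₂, X, Y, H, e₀, himp, V => by
      intro h
      cases h with
      | seqSeq h' =>
          exact NF.seqSeq
            (nf_seq_congr e' T₁ (.seqT T₂ X) (.seqT T₂ Y)
              (fun e₁ h₁ V₁ => nf_seq_congr e' T₂ X Y H e₁ h₁ V₁) e₀ himp V h')
  | .iter T₁, X, Y, H, e₀, himp, V => by
      intro h
      cases h with
      | seqIterEnd h₁ => exact NF.seqIterEnd h₁
      | seqIterN hne h₁ h₂ => exact NF.seqIterN hne h₁ (H e₀ himp _ h₂)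

theorem nfBr_seq_congr (e' : Guard) :
    ∀ (bs : Branches) (X Y : PT),
      (∀ e₀, Guard.Imp e₀ e' → ∀ V, NF e₀ X V → NF e₀ Y V) →
      ∀ e₀, Guard.Imp e₀ e' → ∀ bs',
        NFBr e₀ (bs.seqAll X) bs' → NFBr e₀ (bs.seqAll Y) bs'
  | .nil, X, Y, H, e₀, himp, bs' => by
      intro h
      cases h
      exact NFBr.nil
  | .cons e₁ y d T bs, X, Y, H, e₀, himp, bs' => by
      intro h
      cases h with
      | consDead hf h' =>
          exact NFBr.consDead hf (nfBr_seq_congr e' bs X Y H e₀ himp _ h')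
      | consLive hnf hT hbs =>
          exact NFBr.consLive hnf
            (nf_seq_congr e' T X Y H (Guard.and e₁ e₀)
              (fun σ hs => himp σ ((Bool.and_eq_true _ _).mp hs).2) _ hT)
            (nfBr_seq_congr e' bs X Y H e₀ himp _ hbs)
end

/-- **Lemma (interposed end is neutral).** For all guards `e, e'` such that
`¬(e ⟺ false)` and `e ⟹ e'`, and all pseudo-types `𝕋, 𝕋'`:
`nf_e(𝕋 ; ([e']end ; 𝕋')) = nf_e(𝕋 ; 𝕋')`. -/
theorem nf_interposed_end (e e' : Guard) (T T' : PT)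
    (hne : ¬ Guard.IsFalse e) (himp : Guard.Imp e e') :
    ∀ V, NF e (.seqT T (.seqT (.endP e') T')) V ↔ NF e (.seqT T T') V := by
  intro V
  constructor
  · exact nf_seq_congr e' T (.seqT (.endP e') T') T'
      (fun e₀ h V₀ => (nf_end_left h T' V₀).1) e himp V
  · exact nf_seq_congr e' T T' (.seqT (.endP e') T')
      (fun e₀ h V₀ => (nf_end_left h T' V₀).2) e himp V

end WSI
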